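/- arXiv:1607.01297 — 4 statements merged into one kernel-verified Lean document; each statement's English description precedes it below -/
import Mathlib

section
/- Let N ∈ ℕ with N ≥ 1 and d ∈ ℝ, and let a : ℕ → ℝ be the even-parity QES coefficient sequence for parameters (N, d). Then for every k ≥ 1, a(k) = ((−1)^k / (k!·(k−1)!)) · det P^{(N,k)}(d), where P^{(N,k)}(d) is the k×k tridiagonal matrix defined in the context. -/
/-- The k×k tridiagonal matrix `P^(N,k)(d)` of the even-parity QES construction:
`P 0 0 = d`, `P i i = 2·i·d` for `i ≥ 1`, `P 0 1 = 1`,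
`P i (i+1) = i·(i+1)` for `i ≥ 1`, `P i (i-1) = 2·(N − i + 1)`, all other entries `0`. -/
def Pmat (N : ℕ) (d : ℝ) (k : ℕ) : Matrix (Fin k) (Fin k) ℝ :=
  Matrix.of fun i j =>
    if (i : ℕ) = 0 ∧ (j : ℕ) = 0 then d
    else if (j : ℕ) = (i : ℕ) then 2 * (i : ℝ) * d
    else if (i : ℕ) = 0 ∧ (j : ℕ) = 1 then 1
    else if (j : ℕ) = (i : ℕ) + 1 then (i : ℝ) * ((i : ℝ) + 1)
    else if (j : ℕ) + 1 = (i : ℕ) then 2 * ((N : ℝ) - (i : ℝ) + 1)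
    else 0

/-!
`P^(N,k)(d)` is the `k × k` leading section of one infinite tridiagonal matrix, so its
determinants `D k` obey the continuant recurrence
`D (n+2) = 2(n+1)d · D (n+1) - 2(N-n) · (n+1)!/(n-1)! · D n`.
Normalised by `(-1)^n / (n! (n-1)!)` this is exactly the QES recurrence, and the normalised
sequence starts with `1, -d`. A second-order recurrence with nonvanishing leading coefficient
`(n+1)(n+2)` has a unique solution with given initial values.
-/

open Nat

section Tridiagonal

def leadingSection {R : Type*} (f : ℕ → ℕ → R) (k : ℕ) : Matrix (Fin k) (Fin k) R :=
  Matrix.of fun i j => f i j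

theorem leadingSection_submatrix_castSucc {R : Type*} (f : ℕ → ℕ → R) (k : ℕ) :
    (leadingSection f (k + 1)).submatrix Fin.castSucc Fin.castSucc = leadingSection f k :=
  rfl

variable {R : Type*} [CommRing R] {f : ℕ → ℕ → R}

theorem det_leadingSection_submatrix_succAbove (hf : ∀ i j, i + 1 < j → f i j = 0) (k : ℕ) :
    ((leadingSection f (k + 2)).submatrix Fin.castSucc (Fin.last k).castSucc.succAbove).det
      = f k (k + 1) * (leadingSection f k).det := by
  set M := (leadingSection f (k + 2)).submatrix Fin.castSucc (Fin.last k).castSucc.succAbove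
  have hcol : ∀ i : Fin k, M i.castSucc (Fin.last k) = 0 := fun i => by
    simp only [M, Matrix.submatrix_apply, Fin.succAbove_castSucc_self, Fin.succ_last]
    exact hf _ _ (by simp)
  have hminor : M.submatrix Fin.castSucc Fin.castSucc = leadingSection f k := by
    ext i j
    simp [M, leadingSection, Fin.succAbove_castSucc_of_lt _ _ (Fin.castSucc_lt_last j)]
  rw [Matrix.det_succ_column M (Fin.last k), Fin.sum_univ_castSucc]
  simp only [hcol, mul_zero, zero_mul, Finset.sum_const_zero, zero_add, Fin.succAbove_last,
    hminor, Fin.val_last, ← two_mul, pow_mul, neg_one_sq, one_pow, one_mul]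
  simp [M, leadingSection]

/-- The continuant recurrence: expand along the last row, then the second minor along its
last column. -/
theorem det_leadingSection_succ_succ (hf : ∀ i j, i + 1 < j ∨ j + 1 < i → f i j = 0) (k : ℕ) :
    (leadingSection f (k + 2)).det = f (k + 1) (k + 1) * (leadingSection f (k + 1)).det
      - f (k + 1) k * f k (k + 1) * (leadingSection f k).det := by
  have hrow : ∀ j : Fin k, leadingSection f (k + 2) (Fin.last (k + 1)) j.castSucc.castSucc = 0 :=
    fun j => hf _ _ (Or.inr (by simp))
  rw [Matrix.det_succ_row _ (Fin.last (k + 1)), Fin.sum_univ_castSucc, Fin.sum_univ_castSucc]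
  simp only [hrow, mul_zero, zero_mul, Finset.sum_const_zero, zero_add, Fin.succAbove_last,
    leadingSection_submatrix_castSucc,
    det_leadingSection_submatrix_succAbove fun i j h => hf i j (Or.inl h)]
  simp [leadingSection, ← two_mul, pow_mul]
  ring

end Tridiagonal

theorem eq_of_linear_recurrence {R : Type*} [CommRing R] [IsDomain R] {p q r a b : ℕ → R}
    (hr : ∀ n, r n ≠ 0)
    (ha : ∀ n, p n * a n + q n * a (n + 1) + r n * a (n + 2) = 0)
    (hb : ∀ n, p n * b n + q n * b (n + 1) + r n * b (n + 2) = 0)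
    (h0 : a 0 = b 0) (h1 : a 1 = b 1) : a = b := by
  have key : ∀ n, a n = b n ∧ a (n + 1) = b (n + 1) := by
    intro n
    induction n with
    | zero => exact ⟨h0, h1⟩
    | succ n ih =>
      refine ⟨ih.2, mul_left_cancel₀ (hr n) ?_⟩
      linear_combination ha n - hb n - p n * ih.1 - q n * ih.2
  exact funext fun n => (key n).1

section QES

variable (N : ℕ) (d : ℝ)

def qesEntry (i j : ℕ) : ℝ :=
  if i = 0 ∧ j = 0 then d
  else if j = i then 2 * (i : ℝ) * d
  else if i = 0 ∧ j = 1 then 1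
  else if j = i + 1 then (i : ℝ) * ((i : ℝ) + 1)
  else if j + 1 = i then 2 * ((N : ℝ) - (i : ℝ) + 1)
  else 0

theorem Pmat_eq_leadingSection (k : ℕ) : Pmat N d k = leadingSection (qesEntry N d) k :=
  rfl

theorem qesEntry_eq_zero (i j : ℕ) (h : i + 1 < j ∨ j + 1 < i) : qesEntry N d i j = 0 := by
  unfold qesEntry
  split_ifs <;> first | rfl | omega

theorem qesEntry_succ_self (n : ℕ) : qesEntry N d (n + 1) (n + 1) = 2 * (n + 1) * d := by
  simp [qesEntry]

theorem qesEntry_succ_left (n : ℕ) : qesEntry N d (n + 1) n = 2 * (N - n) := by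
  simp only [qesEntry, if_neg (by omega : n ≠ n + 1 + 1)]
  simp
  ring

/-- At `n = 0` both sides are `1`, because `(0 - 1)! = 0!` in `ℕ`. -/
theorem qesEntry_succ_right (n : ℕ) :
    qesEntry N d n (n + 1) = (n + 1)! / (n - 1)! := by
  rcases n with _ | n
  · simp [qesEntry]
  · simp [qesEntry, Nat.factorial_succ]
    field_simp

theorem det_Pmat_succ_succ (n : ℕ) :
    (Pmat N d (n + 2)).det = 2 * (n + 1) * d * (Pmat N d (n + 1)).det
      - 2 * (N - n) * ((n + 1)! / (n - 1)!) * (Pmat N d n).det := by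
  simp only [Pmat_eq_leadingSection, det_leadingSection_succ_succ (qesEntry_eq_zero N d),
    qesEntry_succ_self, qesEntry_succ_left, qesEntry_succ_right]

noncomputable def qesDetCoeff (n : ℕ) : ℝ :=
  (-1) ^ n / (n ! * (n - 1)! : ℝ) * (Pmat N d n).det

theorem qesDetCoeff_zero : qesDetCoeff N d 0 = 1 := by
  simp [qesDetCoeff]

theorem qesDetCoeff_one : qesDetCoeff N d 1 = -d := by
  simp [qesDetCoeff, Pmat_eq_leadingSection, leadingSection, qesEntry]

theorem qesDetCoeff_recurrence (n : ℕ) :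
    (2 * (N : ℝ) - 2 * n) * qesDetCoeff N d n + 2 * d * (n + 1) * qesDetCoeff N d (n + 1)
      + (n + 1) * (n + 2) * qesDetCoeff N d (n + 2) = 0 := by
  simp only [qesDetCoeff, det_Pmat_succ_succ, Nat.add_sub_cancel, Nat.factorial_succ,
    Nat.cast_mul, pow_succ, show n + 2 - 1 = n + 1 from rfl]
  push_cast
  field_simp
  ring

end QES

theorem even_parity_QES_closed_form_general (N : ℕ) (d : ℝ) (a : ℕ → ℝ)
    (h0 : a 0 = 1) (h1 : a 1 = -d)
    (hrec : ∀ n : ℕ, (2 * (N : ℝ) - 2 * n) * a n + 2 * d * (n + 1) * a (n + 1)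
      + (n + 1) * (n + 2) * a (n + 2) = 0) :
    ∀ k : ℕ, 1 ≤ k →
      a k = ((-1 : ℝ) ^ k / ((Nat.factorial k : ℝ) * (Nat.factorial (k - 1) : ℝ)))
        * (Pmat N d k).det := by
  have ha : a = qesDetCoeff N d :=
    eq_of_linear_recurrence (fun n => by positivity) hrec (qesDetCoeff_recurrence N d)
      (h0.trans (qesDetCoeff_zero N d).symm) (h1.trans (qesDetCoeff_one N d).symm)
  intro k _
  rw [ha, qesDetCoeff]

/-- Closed-form determinantal solution of the even-parity QES recurrences. -/
theorem even_parity_QES_closed_form (N : ℕ) (hN : 1 ≤ N) (d : ℝ) (a : ℕ → ℝ)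
    (h0 : a 0 = 1) (h1 : a 1 = -d)
    (hrec : ∀ n : ℕ, (2 * (N : ℝ) - 2 * n) * a n + 2 * d * (n + 1) * a (n + 1)
      + (n + 1) * (n + 2) * a (n + 2) = 0) :
    ∀ k : ℕ, 1 ≤ k →
      a k = ((-1 : ℝ) ^ k / ((Nat.factorial k : ℝ) * (Nat.factorial (k - 1) : ℝ)))
        * (Pmat N d k).det :=
  even_parity_QES_closed_form_general N d a h0 h1 hrec
end

section
/- Define ψ₀ : ℝ → ℝ by ψ₀(x) = (1 + |x|)·exp(−(x²/2 + |x|)). Then for every x ∈ ℝ with x ≠ 0, ψ₀ is twice differentiable at x and satisfies −ψ₀''(x) + (|x| + 1)²·ψ₀(x) = 3·ψ₀(x). (Thus ψ₀ is an exact eigenfunction at energy E = 3 of the spiked harmonic oscillator V_{[d]}(x) = (|x| − d)² with d = −1.) -/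
/-!
Write `ψ₀ y = φ |y|` with `φ t = (1 + t) e^{-(t²/2 + t)}`. Near `x ≠ 0` the function `ψ₀` agrees
with `y ↦ φ (s y)` for the sign `s = ±1` of `x`, and since `s² = 1` this gives
`ψ₀''(x) = φ''(|x|)`. Finally `φ''(t) = (t + 1)(t² + 2t - 2) e^{-(t²/2 + t)} = ((t + 1)² - 3) φ(t)`
holds for every real `t`.
-/

open Real Filter Topology

theorem exists_comp_abs_eventuallyEq_comp_mul {α : Type*} (f : ℝ → α) {x : ℝ} (hx : x ≠ 0) :
    ∃ s : ℝ, s * s = 1 ∧ s * x = |x| ∧ (fun y => f |y|) =ᶠ[𝓝 x] fun y => f (s * y) := by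
  rcases hx.lt_or_gt with hneg | hpos
  · refine ⟨-1, by norm_num, by rw [abs_of_neg hneg]; ring, ?_⟩
    filter_upwards [eventually_lt_nhds hneg] with y hy
    rw [abs_of_neg hy, neg_one_mul]
  · refine ⟨1, by norm_num, by rw [abs_of_pos hpos]; ring, ?_⟩
    filter_upwards [eventually_gt_nhds hpos] with y hy
    rw [abs_of_pos hy, one_mul]

section ComposeAbs

variable {F : Type*} [NormedAddCommGroup F] [NormedSpace ℝ F] {f : ℝ → F} {x : ℝ}

theorem exists_deriv_comp_abs_eventuallyEq (hx : x ≠ 0) :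
    ∃ s : ℝ, s * s = 1 ∧ s * x = |x| ∧
      deriv (fun y => f |y|) =ᶠ[𝓝 x] fun y => s • deriv f (s * y) := by
  obtain ⟨s, hs, hsx, heq⟩ := exists_comp_abs_eventuallyEq_comp_mul f hx
  exact ⟨s, hs, hsx, heq.deriv.trans (.of_eq (funext (deriv_comp_mul_left s f)))⟩

theorem differentiableAt_comp_abs (hx : x ≠ 0) (hf : DifferentiableAt ℝ f |x|) :
    DifferentiableAt ℝ (fun y => f |y|) x := by
  obtain ⟨s, -, hsx, heq⟩ := exists_comp_abs_eventuallyEq_comp_mul f hx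
  rw [← hsx] at hf
  exact heq.differentiableAt_iff.mpr (hf.comp x (differentiableAt_id.const_mul s))

theorem differentiableAt_deriv_comp_abs (hx : x ≠ 0) (hf : DifferentiableAt ℝ (deriv f) |x|) :
    DifferentiableAt ℝ (deriv fun y => f |y|) x := by
  obtain ⟨s, -, hsx, heq⟩ := exists_deriv_comp_abs_eventuallyEq (f := f) hx
  rw [← hsx] at hf
  exact heq.differentiableAt_iff.mpr ((hf.comp x (differentiableAt_id.const_mul s)).const_smul s)

theorem deriv_deriv_comp_abs (hx : x ≠ 0) :
    deriv (deriv fun y => f |y|) x = deriv (deriv f) |x| := by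
  obtain ⟨s, hs, hsx, heq⟩ := exists_deriv_comp_abs_eventuallyEq (f := f) hx
  rw [heq.deriv_eq, deriv_fun_const_smul_field, deriv_comp_mul_left, smul_smul, hs, one_smul, hsx]

end ComposeAbs

noncomputable def spikedGroundProfile (t : ℝ) : ℝ := (1 + t) * exp (-(t ^ 2 / 2 + t))

theorem hasDerivAt_exp_neg_sq_half_add (t : ℝ) :
    HasDerivAt (fun y => exp (-(y ^ 2 / 2 + y))) (-(t + 1) * exp (-(t ^ 2 / 2 + t))) t := by
  have h : HasDerivAt (fun y : ℝ => -(y ^ 2 / 2 + y)) (-(t + 1)) t := by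
    refine (((hasDerivAt_pow 2 t).div_const 2).add (hasDerivAt_id' t)).neg.congr_deriv ?_
    push_cast
    ring
  simpa only [mul_comm] using h.exp

theorem hasDerivAt_spikedGroundProfile (t : ℝ) :
    HasDerivAt spikedGroundProfile (-(t ^ 2 + 2 * t) * exp (-(t ^ 2 / 2 + t))) t := by
  refine (((hasDerivAt_id' t).const_add 1).mul (hasDerivAt_exp_neg_sq_half_add t)).congr_deriv ?_
  ring

theorem deriv_spikedGroundProfile :
    deriv spikedGroundProfile = fun t => -(t ^ 2 + 2 * t) * exp (-(t ^ 2 / 2 + t)) :=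
  funext fun t => (hasDerivAt_spikedGroundProfile t).deriv

theorem hasDerivAt_deriv_spikedGroundProfile (t : ℝ) :
    HasDerivAt (deriv spikedGroundProfile)
      ((t + 1) * (t ^ 2 + 2 * t - 2) * exp (-(t ^ 2 / 2 + t))) t := by
  rw [deriv_spikedGroundProfile]
  have hpoly : HasDerivAt (fun y : ℝ => -(y ^ 2 + 2 * y)) (-(2 * t + 2)) t := by
    refine ((hasDerivAt_pow 2 t).add ((hasDerivAt_id' t).const_mul 2)).neg.congr_deriv ?_
    push_cast
    ring
  refine (hpoly.mul (hasDerivAt_exp_neg_sq_half_add t)).congr_deriv ?_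
  ring

theorem spikedGroundProfile_schrodinger (t : ℝ) :
    -deriv (deriv spikedGroundProfile) t + (t + 1) ^ 2 * spikedGroundProfile t =
      3 * spikedGroundProfile t := by
  rw [(hasDerivAt_deriv_spikedGroundProfile t).deriv, spikedGroundProfile]
  ring

/-- Away from the origin, `ψ₀(x) = (1+|x|)·e^{−(x²/2+|x|)}` is twice differentiable
and is an exact eigenfunction at energy `E = 3` of the spiked harmonic oscillator
`V(x) = (|x|+1)²` (the potential `V_{[d]}` at `d = −1`). -/
theorem spiked_QES_ground_state_eq (ψ₀ : ℝ → ℝ)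
    (hψ₀ : ∀ x : ℝ, ψ₀ x = (1 + |x|) * Real.exp (-(x ^ 2 / 2 + |x|))) :
    ∀ x : ℝ, x ≠ 0 →
      DifferentiableAt ℝ ψ₀ x ∧ DifferentiableAt ℝ (deriv ψ₀) x ∧
        -(deriv (deriv ψ₀) x) + (|x| + 1) ^ 2 * ψ₀ x = 3 * ψ₀ x := by
  intro x hx
  obtain rfl : ψ₀ = fun y => spikedGroundProfile |y| :=
    funext fun y => by rw [hψ₀, spikedGroundProfile, sq_abs]
  exact ⟨differentiableAt_comp_abs hx (hasDerivAt_spikedGroundProfile _).differentiableAt,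
    differentiableAt_deriv_comp_abs hx (hasDerivAt_deriv_spikedGroundProfile _).differentiableAt,
    by rw [deriv_deriv_comp_abs hx]; exact spikedGroundProfile_schrodinger |x|⟩
end

section
/- Let N ∈ ℕ and d ∈ ℝ, let a : ℕ → ℝ be the even-parity QES coefficient sequence for parameters (N, d), and assume a(N+1) = 0. Define ψ : ℝ → ℝ by ψ(x) = e^{−x²/2 + d·|x|} · Σ_{k=0}^{N} a(k)·|x|^k. Then ψ is differentiable at 0 with ψ'(0) = 0, and for every x ≠ 0, ψ is twice differentiable at x and satisfies −ψ''(x) + (|x| − d)²·ψ(x) = (2N + 1)·ψ(x). -/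
/-!
On each half-line `ψ` is `f(±x)` with `f(t) = e^{-t²/2 + dt} p(t)` and `p = Σ_{k ≤ N} a_k X^k`.
Since `(e^{-t²/2 + dt} q)' = e^{-t²/2 + dt} ((d - t) q + q')`, the equation
`-f'' + (t - d)² f = (2N + 1) f` is equivalent to the Hermite-type equation
`p'' + 2(d - t) p' + 2N p = 0`, whose coefficient of `t^n` is the recurrence at `n`.
The recurrence together with `a(N+1) = 0` forces `a(n) = 0` for all `n > N`, so the truncated
polynomial `p` solves it exactly. At the origin `f'(0) = d a_0 + a_1 = 0`, so the even extension
`f(|x|)` has derivative `0` there; away from the origin `|x|` is locally `±x` and the sign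
squares away in `ψ''`.
-/

open Polynomial Filter Topology Finset

theorem HasDerivAt.comp_abs {f : ℝ → ℝ} {f' x : ℝ} (hf : HasDerivAt f f' |x|) (hx : x ≠ 0) :
    HasDerivAt (fun y => f |y|) (f' * SignType.sign x) x :=
  hf.comp x (hasDerivAt_abs hx)

theorem HasDerivAt.comp_abs_of_deriv_zero {f : ℝ → ℝ} (hf : HasDerivAt f 0 0) :
    HasDerivAt (fun x => f |x|) 0 0 := by
  rw [hasDerivAt_iff_isLittleO] at hf ⊢
  simp only [sub_zero, smul_zero, abs_zero] at hf ⊢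
  have habs : Tendsto (fun x : ℝ => |x|) (𝓝 0) (𝓝 0) := continuous_abs.tendsto' 0 0 abs_zero
  exact (hf.comp_tendsto habs).trans_isBigO
    (Asymptotics.isBigO_of_le _ fun x => by simp : (fun x : ℝ => |x|) =O[𝓝 0] fun x => x)

theorem eventually_sign_eq {x : ℝ} (hx : x ≠ 0) :
    ∀ᶠ y in 𝓝 x, SignType.sign y = SignType.sign x := by
  rcases hx.lt_or_gt with h | h
  · filter_upwards [Iio_mem_nhds h] with y hy
    rw [sign_neg hy, sign_neg h]
  · filter_upwards [Ioi_mem_nhds h] with y hy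
    rw [sign_pos hy, sign_pos h]

theorem hasDerivAt_deriv_comp_abs {f f' : ℝ → ℝ} {f'' x : ℝ}
    (hf : ∀ t, HasDerivAt f (f' t) t) (hf' : HasDerivAt f' f'' |x|) (hx : x ≠ 0) :
    HasDerivAt (deriv fun y => f |y|) f'' x := by
  have hderiv : (fun y => f' |y| * SignType.sign x) =ᶠ[𝓝 x] deriv fun y => f |y| := by
    filter_upwards [eventually_sign_eq hx, eventually_ne_nhds hx] with y hsign hy
    rw [((hf |y|).comp_abs hy).deriv, hsign]
  have hsign_sq : (SignType.sign x : ℝ) * SignType.sign x = 1 := by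
    rcases hx.lt_or_gt with h | h <;> simp [h]
  simpa [mul_assoc, hsign_sq] using
    ((hf'.comp_abs hx).mul_const _).congr_of_eventuallyEq hderiv.symm

noncomputable def expWeighted (d : ℝ) (p : ℝ[X]) (t : ℝ) : ℝ :=
  Real.exp (-t ^ 2 / 2 + d * t) * p.eval t

noncomputable def weightedDerivative (d : ℝ) (p : ℝ[X]) : ℝ[X] :=
  (C d - X) * p + derivative p

theorem hasDerivAt_expWeighted (d : ℝ) (p : ℝ[X]) (t : ℝ) :
    HasDerivAt (expWeighted d p) (expWeighted d (weightedDerivative d p) t) t := by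
  have hexponent : HasDerivAt (fun t => -t ^ 2 / 2 + d * t) (d - t) t :=
    (((hasDerivAt_pow 2 t).neg.div_const 2).add ((hasDerivAt_id t).const_mul d)).congr_deriv
      (by simp only [Nat.cast_ofNat, Nat.add_one_sub_one, pow_one, mul_one]; ring)
  refine (hexponent.exp.mul (p.hasDerivAt t)).congr_deriv ?_
  simp only [expWeighted, weightedDerivative, eval_add, eval_mul, eval_sub, eval_C, eval_X]
  ring

theorem expWeighted_schrodinger {d ν : ℝ} {p : ℝ[X]}
    (hp : derivative (derivative p) + 2 * (C d - X) * derivative p + C (2 * ν) * p = 0)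
    (t : ℝ) :
    -expWeighted d (weightedDerivative d (weightedDerivative d p)) t
        + (t - d) ^ 2 * expWeighted d p t = (2 * ν + 1) * expWeighted d p t := by
  have h := congrArg (eval t) hp
  simp only [eval_add, eval_mul, eval_sub, eval_C, eval_X, eval_ofNat, eval_zero] at h
  simp only [expWeighted, weightedDerivative, derivative_add, derivative_mul, derivative_sub,
    derivative_C, derivative_X, eval_add, eval_mul, eval_sub, eval_C, eval_X, eval_zero, eval_one]
  linear_combination -Real.exp (-t ^ 2 / 2 + d * t) * h

noncomputable def qesPoly (N : ℕ) (a : ℕ → ℝ) : ℝ[X] :=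
  ∑ k ∈ range (N + 1), C (a k) * X ^ k

section Recurrence

variable {N : ℕ} {d : ℝ} {a : ℕ → ℝ}
  (hrec : ∀ n : ℕ, (2 * (N : ℝ) - 2 * n) * a n + 2 * d * (n + 1) * a (n + 1)
      + (n + 1) * (n + 2) * a (n + 2) = 0)
include hrec

theorem qes_coeff_add_two_eq_zero {n : ℕ} (hn : ((N : ℝ) - n) * a n = 0)
    (hn1 : a (n + 1) = 0) : a (n + 2) = 0 := by
  have h := hrec n
  rw [hn1] at h
  have hpos : ((n : ℝ) + 1) * (n + 2) ≠ 0 := by positivity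
  exact (mul_eq_zero.mp (by linear_combination h - 2 * hn)).resolve_left hpos

theorem qes_coeff_eq_zero_of_lt (hterm : a (N + 1) = 0) {n : ℕ} (hn : N < n) : a n = 0 := by
  suffices ∀ m, a (N + m + 1) = 0 ∧ a (N + m + 2) = 0 by
    obtain ⟨m, rfl⟩ := Nat.exists_eq_add_of_lt hn
    exact (this m).1
  intro m
  induction m with
  | zero => exact ⟨hterm, qes_coeff_add_two_eq_zero hrec (by simp) hterm⟩
  | succ m ih =>
    exact ⟨ih.2, qes_coeff_add_two_eq_zero hrec (n := N + m + 1) (by rw [ih.1, mul_zero]) ih.2⟩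

theorem coeff_qesPoly (hterm : a (N + 1) = 0) (n : ℕ) : (qesPoly N a).coeff n = a n := by
  simp only [qesPoly, finsetSum_coeff, coeff_C_mul_X_pow, sum_ite_eq, mem_range]
  split_ifs with h
  · rfl
  · exact (qes_coeff_eq_zero_of_lt hrec hterm (by omega)).symm

theorem qesPoly_hermite (hterm : a (N + 1) = 0) :
    derivative (derivative (qesPoly N a)) + 2 * (C d - X) * derivative (qesPoly N a)
      + C (2 * (N : ℝ)) * qesPoly N a = 0 := by
  have hsplit : (2 : ℝ[X]) * (C d - X) * derivative (qesPoly N a)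
      = C (2 * d) * derivative (qesPoly N a) - C 2 * (X * derivative (qesPoly N a)) := by
    simp only [C_mul, C_ofNat]
    ring
  rw [hsplit]
  ext n
  have h := hrec n
  simp only [coeff_add, coeff_sub, coeff_C_mul, coeff_derivative, coeff_qesPoly hrec hterm,
    coeff_zero]
  rcases n with _ | n
  · simp only [coeff_X_mul_zero]
    push_cast at h ⊢
    linear_combination h
  · simp only [coeff_X_mul, coeff_derivative, coeff_qesPoly hrec hterm]
    push_cast at h ⊢
    linear_combination h

end Recurrence

/-- A terminating even-parity QES solution yields an exact bound state: the
symmetrized wave function `ψ(x) = e^{−x²/2+d|x|}·Σ_{k≤N} a_k |x|^k` matches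
smoothly at the origin (`ψ'(0) = 0`) and solves the Schrödinger equation
`−ψ'' + (|x|−d)²ψ = (2N+1)ψ` away from the origin. -/
theorem even_parity_QES_bound_state (N : ℕ) (d : ℝ) (a : ℕ → ℝ)
    (h0 : a 0 = 1) (h1 : a 1 = -d)
    (hrec : ∀ n : ℕ, (2 * (N : ℝ) - 2 * n) * a n + 2 * d * (n + 1) * a (n + 1)
      + (n + 1) * (n + 2) * a (n + 2) = 0)
    (hterm : a (N + 1) = 0) (ψ : ℝ → ℝ)
    (hψ : ∀ x : ℝ, ψ x = Real.exp (-x ^ 2 / 2 + d * |x|)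
      * ∑ k ∈ Finset.range (N + 1), a k * |x| ^ k) :
    (DifferentiableAt ℝ ψ 0 ∧ deriv ψ 0 = 0) ∧
      ∀ x : ℝ, x ≠ 0 →
        DifferentiableAt ℝ ψ x ∧ DifferentiableAt ℝ (deriv ψ) x ∧
          -(deriv (deriv ψ) x) + (|x| - d) ^ 2 * ψ x = (2 * (N : ℝ) + 1) * ψ x := by
  set p := qesPoly N a
  have hψp : ψ = fun x => expWeighted d p |x| := funext fun x => by
    simp only [hψ, expWeighted, p, qesPoly, eval_finsetSum, eval_mul, eval_C, eval_pow, eval_X,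
      sq_abs]
  have hf := hasDerivAt_expWeighted d p
  have hf' := hasDerivAt_expWeighted d (weightedDerivative d p)
  have hslope : expWeighted d (weightedDerivative d p) 0 = 0 := by
    simp [expWeighted, weightedDerivative, ← coeff_zero_eq_eval_zero, coeff_derivative,
      coeff_qesPoly hrec hterm, p, h0, h1]
  subst hψp
  refine ⟨?_, fun x hx => ?_⟩
  · have h := (hslope ▸ hf 0).comp_abs_of_deriv_zero
    exact ⟨h.differentiableAt, h.deriv⟩
  · have hderiv2 := hasDerivAt_deriv_comp_abs hf (hf' |x|) hx
    refine ⟨((hf |x|).comp_abs hx).differentiableAt, hderiv2.differentiableAt, ?_⟩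
    rw [hderiv2.deriv]
    exact expWeighted_schrodinger (qesPoly_hermite hrec hterm) |x|
end

section
/- Let d ∈ ℝ. Let a : ℕ → ℝ be the even-parity QES coefficient sequence for parameters (N, d) with N = 4, and let ã : ℕ → ℝ be the even-parity QES coefficient sequence for parameters (N, d) with N = 5. Then: (i) a(5) = 0 if and only if d·(4d⁴ − 28d² + 27) = 0; (ii) ã(6) = 0 if and only if 4d⁶ − 40d⁴ + 75d² − 15 = 0. (These reproduce the table polynomials P^{(4)}(d) = 27 − 28d² + 4d⁴ and P^{(5)}(d) = −15 + 75d² − 40d⁴ + 4d⁶ of QES-compatible even-parity shifts, up to the factorizing harmonic-oscillator root d = 0 for N = 4.) -/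
/-- The even-parity QES quantization polynomials at `N = 4` and `N = 5`:
the terminating solutions satisfy `d·(4d⁴ − 28d² + 27) = 0` (for `N = 4`) and
`4d⁶ − 40d⁴ + 75d² − 15 = 0` (for `N = 5`), reproducing the table polynomials
`P⁽⁴⁾(d) = 27 − 28d² + 4d⁴` and `P⁽⁵⁾(d) = −15 + 75d² − 40d⁴ + 4d⁶`. -/
theorem even_QES_N4_N5 (d : ℝ) (a a' : ℕ → ℝ)
    (ha0 : a 0 = 1) (ha1 : a 1 = -d)
    (harec : ∀ n : ℕ, (2 * ((4 : ℕ) : ℝ) - 2 * n) * a n + 2 * d * (n + 1) * a (n + 1)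
      + (n + 1) * (n + 2) * a (n + 2) = 0)
    (ha'0 : a' 0 = 1) (ha'1 : a' 1 = -d)
    (ha'rec : ∀ n : ℕ, (2 * ((5 : ℕ) : ℝ) - 2 * n) * a' n + 2 * d * (n + 1) * a' (n + 1)
      + (n + 1) * (n + 2) * a' (n + 2) = 0) :
    (a 5 = 0 ↔ d * (4 * d ^ 4 - 28 * d ^ 2 + 27) = 0) ∧
      (a' 6 = 0 ↔ 4 * d ^ 6 - 40 * d ^ 4 + 75 * d ^ 2 - 15 = 0) := by
  have h0 := harec 0
  have h1 := harec 1
  have h2 := harec 2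
  have h3 := harec 3
  push_cast at h0 h1 h2 h3
  have k0 := ha'rec 0
  have k1 := ha'rec 1
  have k2 := ha'rec 2
  have k3 := ha'rec 3
  have k4 := ha'rec 4
  push_cast at k0 k1 k2 k3 k4
  have ea2 : a 2 = d ^ 2 - 4 := by
    linear_combination h0 / 2 - 4 * ha0 - d * ha1
  have ea3 : a 3 = (11 * d - 2 * d ^ 3) / 3 := by
    linear_combination h1 / 6 - ha1 - (2 * d / 3) * ea2
  have ea4 : a 4 = (2 * d ^ 4 - 13 * d ^ 2 + 8) / 6 := by
    linear_combination h2 / 12 - ea2 / 3 - (d / 2) * ea3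
  have ea5 : a 5 = -(4 * d ^ 5 - 28 * d ^ 3 + 27 * d) / 30 := by
    linear_combination h3 / 20 - ea3 / 10 - (2 * d / 5) * ea4
  have eb2 : a' 2 = d ^ 2 - 5 := by
    linear_combination k0 / 2 - 5 * ha'0 - d * ha'1
  have eb3 : a' 3 = (14 * d - 2 * d ^ 3) / 3 := by
    linear_combination k1 / 6 - (4 / 3) * ha'1 - (2 * d / 3) * eb2
  have eb4 : a' 4 = (2 * d ^ 4 - 17 * d ^ 2 + 15) / 6 := by
    linear_combination k2 / 12 - eb2 / 2 - (d / 2) * eb3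
  have eb5 : a' 5 = -(2 * d ^ 5 - 19 * d ^ 3 + 29 * d) / 15 := by
    linear_combination k3 / 20 - eb3 / 5 - (2 * d / 5) * eb4
  have eb6 : a' 6 = (4 * d ^ 6 - 40 * d ^ 4 + 75 * d ^ 2 - 15) / 90 := by
    linear_combination k4 / 30 - eb4 / 15 - (d / 3) * eb5
  constructor
  · have hid : d * (4 * d ^ 4 - 28 * d ^ 2 + 27) = 4 * d ^ 5 - 28 * d ^ 3 + 27 * d := by ring
    rw [ea5, hid]
    constructor
    · intro h; linarith
    · intro h; linarith
  · rw [eb6]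
    constructor
    · intro h; linarith
    · intro h; linarith
end
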